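/- Let p > 1, let Γ : ℝⁿ × ℝⁿ × (0,∞) → [0,∞) be measurable satisfying (K1), let τ > 0, and for i = 1, 2 let u_i be a solution of the integral equation on ℝⁿ × (0,τ) with initial data u_{0,i} ∈ L^∞, u_{0,i} ≥ 0. Then for any σ ∈ (0,τ) there exists a constant C, depending only on p, ‖u₁‖_{L^∞(0,σ;L^∞)} and ‖u₂‖_{L^∞(0,σ;L^∞)}, such that sup_{0<t≤σ} ‖u₁(t) − u₂(t)‖_{L^∞} ≤ C ‖u_{0,1} − u_{0,2}‖_{L^∞}. In particular, bounded solutions of the integral equation with the same initial data coincide. -/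

import Mathlib

/-!
Subtracting the two integral equations and using that `Γ(x, ·, t) w` is a probability density
(K1), the difference `d(t) = ‖u₁(t) - u₂(t)‖_∞` satisfies
`d(t) ≤ ‖u₀₁ - u₀₂‖_∞ + L ∫₀ᵗ d(s) ds`, where, for a bound `M` of `u₁, u₂` on `(0, σ]`,
`L = p max(M, 1)^(p-1)` is the Lipschitz constant of `r ↦ rᵖ` on `[0, max(M, 1)]`. Gronwall's inequality, in the form that bounds the
weighted supremum `Φ = sup_{s ≤ σ} e^{-2Ls} d(s)` by `‖u₀₁ - u₀₂‖_∞ + Φ / 2`, then gives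
`d(t) ≤ 2 e^{2Lσ} ‖u₀₁ - u₀₂‖_∞`.
-/

open MeasureTheory Metric Set

/-- Case (A) or case (B) of the paper: the weight is `w(x) = |x₁|^α` with `0 ≤ α < 1`,
or `w(x) = |x|^α` with `0 ≤ α < n`. -/
def CaseAB (n : ℕ) (hn : 0 < n) (α : ℝ) (w : EuclideanSpace ℝ (Fin n) → ℝ) : Prop :=
  (0 ≤ α ∧ α < 1 ∧ ∀ x, w x = |x ⟨0, hn⟩| ^ α) ∨
  (0 ≤ α ∧ (α : ℝ) < n ∧ ∀ x, w x = ‖x‖ ^ α)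

/-- The measure `w(x) dx` on `ℝⁿ`. -/
noncomputable def wMeas (n : ℕ) (w : EuclideanSpace ℝ (Fin n) → ℝ) :
    Measure (EuclideanSpace ℝ (Fin n)) :=
  volume.withDensity fun x => ENNReal.ofReal (w x)

/-- The weak Lorentz norm `‖f‖_{L^{r,∞}(μ)} = sup_{λ>0} λ μ({|f| > λ})^{1/r}` for
`1 < r < ∞`, with `L^{∞,∞}(μ) = L^∞`. -/
noncomputable def weakNorm {X : Type*} [MeasurableSpace X] (μ : Measure X) (f : X → ℝ)
    (r : ENNReal) : ENNReal :=
  if r = ⊤ then eLpNorm f ⊤ μ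
  else ⨆ (lam : ℝ) (_ : 0 < lam), ENNReal.ofReal lam * μ {x | lam < |f x|} ^ (1 / r.toReal)

/-- Property (K1): `∫ Γ(x,y,t) w(x) dx = ∫ Γ(x,y,t) w(y) dy = 1` for all `x, y, t > 0`. -/
def PropK1 {n : ℕ} (w : EuclideanSpace ℝ (Fin n) → ℝ)
    (Γ : EuclideanSpace ℝ (Fin n) → EuclideanSpace ℝ (Fin n) → ℝ → ℝ) : Prop :=
  ∀ (x y : EuclideanSpace ℝ (Fin n)) (t : ℝ), 0 < t →
    (∫⁻ z, ENNReal.ofReal (Γ z y t * w z)) = 1 ∧ (∫⁻ z, ENNReal.ofReal (Γ x z t * w z)) = 1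

/-- Property (K2): `Γ(x,y,t) = ∫ Γ(x,ξ,t-s) Γ(ξ,y,s) w(ξ) dξ` for `t > s > 0`. -/
def PropK2 {n : ℕ} (w : EuclideanSpace ℝ (Fin n) → ℝ)
    (Γ : EuclideanSpace ℝ (Fin n) → EuclideanSpace ℝ (Fin n) → ℝ → ℝ) : Prop :=
  ∀ (x y : EuclideanSpace ℝ (Fin n)) (s t : ℝ), 0 < s → s < t →
    ENNReal.ofReal (Γ x y t) = ∫⁻ ξ, ENNReal.ofReal (Γ x ξ (t - s) * Γ ξ y s * w ξ)

/-- Property (K3): two-sided Gaussian bounds in terms of `w(B(x,√t))`. -/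
def PropK3 {n : ℕ} (w : EuclideanSpace ℝ (Fin n) → ℝ)
    (Γ : EuclideanSpace ℝ (Fin n) → EuclideanSpace ℝ (Fin n) → ℝ → ℝ) : Prop :=
  ∃ cs Cs : ℝ, 0 < cs ∧ cs ≤ Cs ∧
    ∀ (x y : EuclideanSpace ℝ (Fin n)) (t : ℝ), 0 < t →
      cs / (Real.sqrt (∫ z in ball x (Real.sqrt t), w z) *
            Real.sqrt (∫ z in ball y (Real.sqrt t), w z)) *
          Real.exp (-‖x - y‖ ^ 2 / (cs * t)) ≤ Γ x y t ∧
      Γ x y t ≤ Cs / (Real.sqrt (∫ z in ball x (Real.sqrt t), w z) *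
            Real.sqrt (∫ z in ball y (Real.sqrt t), w z)) *
          Real.exp (-‖x - y‖ ^ 2 / (Cs * t))

/-- `u` is a (mild) solution of `∂ₜu - w⁻¹ div(w ∇u) = uᵖ`, `u(·,0) = u₀ ≥ 0`, on
`ℝⁿ × (0,T)`: `u` is nonnegative, measurable, essentially bounded on `ℝⁿ × (0,t)` for all
`t < T`, and for each `0 < t < T` and almost every `x`,
`u(x,t) = ∫ Γ(x,y,t) u₀(y) w(y) dy + ∫₀ᵗ ∫ Γ(x,y,t-s) u(y,s)ᵖ w(y) dy ds < ∞`;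
it is global-in-time if `T = ∞`. -/
def IsSolOn (n : ℕ) (w : EuclideanSpace ℝ (Fin n) → ℝ)
    (Γ : EuclideanSpace ℝ (Fin n) → EuclideanSpace ℝ (Fin n) → ℝ → ℝ) (p : ℝ)
    (u₀ : EuclideanSpace ℝ (Fin n) → ℝ) (u : EuclideanSpace ℝ (Fin n) → ℝ → ℝ)
    (T : ENNReal) : Prop :=
  Measurable (Function.uncurry u) ∧
  (∀ x t, 0 ≤ u x t) ∧
  (∃ M : ℝ, ∀ t : ℝ, 0 < t → ENNReal.ofReal t < T →
    ∀ᵐ x ∂(volume : Measure (EuclideanSpace ℝ (Fin n))), u x t ≤ M) ∧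
  ∀ t : ℝ, 0 < t → ENNReal.ofReal t < T →
    ∀ᵐ x ∂(volume : Measure (EuclideanSpace ℝ (Fin n))),
      ENNReal.ofReal (u x t) =
        (∫⁻ y, ENNReal.ofReal (Γ x y t * u₀ y * w y)) +
        ∫⁻ s in Ioo (0 : ℝ) t, ∫⁻ y, ENNReal.ofReal (Γ x y (t - s) * u y s ^ p * w y)

open scoped ENNReal

lemma abs_rpow_sub_rpow_le {p M a b : ℝ} (hp : 1 ≤ p) (ha : a ∈ Icc 0 M) (hb : b ∈ Icc 0 M) :
    |a ^ p - b ^ p| ≤ p * M ^ (p - 1) * |a - b| := by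
  have hderiv : ∀ x ∈ Icc 0 M,
      HasDerivWithinAt (fun x : ℝ => x ^ p) (p * x ^ (p - 1)) (Icc 0 M) x :=
    fun x _ => (Real.hasDerivAt_rpow_const (Or.inr hp)).hasDerivWithinAt
  have hbound : ∀ x ∈ Icc 0 M, ‖p * x ^ (p - 1)‖ ≤ p * M ^ (p - 1) := fun x hx => by
    rw [Real.norm_of_nonneg (by have := hx.1; positivity)]
    exact mul_le_mul_of_nonneg_left (Real.rpow_le_rpow hx.1 hx.2 (by linarith)) (by linarith)
  simpa only [Real.norm_eq_abs] using
    (convex_Icc 0 M).norm_image_sub_le_of_norm_hasDerivWithin_le hderiv hbound hb ha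

lemma ENNReal.ofReal_abs_sub_le_of_le_add {a b : ℝ} {D : ℝ≥0∞} (ha : 0 ≤ a) (hb : 0 ≤ b)
    (hab : ENNReal.ofReal a ≤ ENNReal.ofReal b + D)
    (hba : ENNReal.ofReal b ≤ ENNReal.ofReal a + D) :
    ENNReal.ofReal |a - b| ≤ D := by
  rcases le_total b a with h | h
  · rw [abs_of_nonneg (sub_nonneg.2 h), ENNReal.ofReal_sub _ hb]
    exact tsub_le_iff_left.2 hab
  · rw [abs_of_nonpos (sub_nonpos.2 h), neg_sub, ENNReal.ofReal_sub _ ha]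
    exact tsub_le_iff_left.2 hba

lemma lintegral_Ioo_ofReal_exp_mul_le {a : ℝ} (ha : 0 < a) (t : ℝ) :
    ∫⁻ s in Ioo 0 t, ENNReal.ofReal (Real.exp (a * s)) ≤
      ENNReal.ofReal (Real.exp (a * t) / a) := by
  calc ∫⁻ s in Ioo 0 t, ENNReal.ofReal (Real.exp (a * s))
      ≤ ∫⁻ s in Iic t, ENNReal.ofReal (Real.exp (a * s)) :=
        lintegral_mono_set (Ioo_subset_Ioc_self.trans Ioc_subset_Iic_self)
    _ = ENNReal.ofReal (Real.exp (a * t) / a) := by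
      rw [← ofReal_integral_eq_lintegral_ofReal (integrableOn_exp_mul_Iic ha t)
        (Filter.Eventually.of_forall fun _ => (Real.exp_pos _).le), integral_exp_mul_Iic ha]

lemma ofReal_exp_neg_mul_le_of_le_add_lintegral {d : ℝ → ℝ≥0∞} {E Φ : ℝ≥0∞} {L σ : ℝ}
    (hL : 0 < L) (hd_le : ∀ s ∈ Ioc 0 σ, d s ≤ ENNReal.ofReal (Real.exp (2 * L * s)) * Φ)
    (hd : ∀ t ∈ Ioc 0 σ, ∀ B : ℝ → ℝ≥0∞, Measurable B → (∀ s ∈ Ioo 0 t, d s ≤ B s) →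
      d t ≤ E + ∫⁻ s in Ioo 0 t, ENNReal.ofReal L * B s)
    {t : ℝ} (ht : t ∈ Ioc 0 σ) :
    ENNReal.ofReal (Real.exp (-(2 * L * t))) * d t ≤ E + 2⁻¹ * Φ := by
  have hB : Measurable fun s : ℝ => ENNReal.ofReal (Real.exp (2 * L * s)) * Φ := by fun_prop
  have hhalf : ENNReal.ofReal (Real.exp (-(2 * L * t))) *
      (ENNReal.ofReal L * ENNReal.ofReal (Real.exp (2 * L * t) / (2 * L))) = 2⁻¹ := by
    have h : Real.exp (-(2 * L * t)) * (L * (Real.exp (2 * L * t) / (2 * L))) = 2⁻¹ := by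
      rw [Real.exp_neg]; field_simp
    rw [← ENNReal.ofReal_mul hL.le, ← ENNReal.ofReal_mul (Real.exp_pos _).le, h,
      ENNReal.ofReal_inv_of_pos two_pos, ENNReal.ofReal_ofNat]
  have hdecay : ENNReal.ofReal (Real.exp (-(2 * L * t))) ≤ 1 :=
    ENNReal.ofReal_le_one.2 (Real.exp_le_one_iff.2 (by nlinarith [ht.1]))
  calc ENNReal.ofReal (Real.exp (-(2 * L * t))) * d t
      ≤ ENNReal.ofReal (Real.exp (-(2 * L * t))) * (E + ∫⁻ s in Ioo 0 t,
          ENNReal.ofReal L * (ENNReal.ofReal (Real.exp (2 * L * s)) * Φ)) := by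
        gcongr
        exact hd t ht _ hB fun s hs => hd_le s ⟨hs.1, hs.2.le.trans ht.2⟩
    _ = ENNReal.ofReal (Real.exp (-(2 * L * t))) * (E + ENNReal.ofReal L *
          (∫⁻ s in Ioo 0 t, ENNReal.ofReal (Real.exp (2 * L * s))) * Φ) := by
        rw [lintegral_const_mul _ hB, lintegral_mul_const _ (by fun_prop),
          mul_assoc (ENNReal.ofReal L)]
    _ ≤ ENNReal.ofReal (Real.exp (-(2 * L * t))) * (E + ENNReal.ofReal L *
          ENNReal.ofReal (Real.exp (2 * L * t) / (2 * L)) * Φ) := by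
        gcongr; exact lintegral_Ioo_ofReal_exp_mul_le (by positivity) t
    _ = ENNReal.ofReal (Real.exp (-(2 * L * t))) * E + 2⁻¹ * Φ := by
        rw [mul_add, ← mul_assoc (ENNReal.ofReal _) _ Φ, hhalf]
    _ ≤ E + 2⁻¹ * Φ := by gcongr; exact mul_le_of_le_one_left' hdecay

/- `d` is an essential supremum in `x` for each `s` and need not be measurable in `s`, so the
integral inequality is only asked of measurable majorants `B` of `d`. -/
theorem le_ofReal_mul_of_le_add_lintegral_majorant {d : ℝ → ℝ≥0∞} {E M : ℝ≥0∞} {L σ : ℝ}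
    (hL : 0 < L) (hM : M ≠ ⊤) (hdM : ∀ s ∈ Ioc 0 σ, d s ≤ M)
    (hd : ∀ t ∈ Ioc 0 σ, ∀ B : ℝ → ℝ≥0∞, Measurable B → (∀ s ∈ Ioo 0 t, d s ≤ B s) →
      d t ≤ E + ∫⁻ s in Ioo 0 t, ENNReal.ofReal L * B s) :
    ∀ t ∈ Ioc 0 σ, d t ≤ ENNReal.ofReal (2 * Real.exp (2 * L * σ)) * E := by
  set Φ := ⨆ s ∈ Ioc 0 σ, ENNReal.ofReal (Real.exp (-(2 * L * s))) * d s
  have hΦ_ne_top : Φ ≠ ⊤ :=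
    ne_top_of_le_ne_top hM (iSup₂_le fun s hs => (mul_le_of_le_one_left'
      (ENNReal.ofReal_le_one.2 (Real.exp_le_one_iff.2 (by nlinarith [hs.1])))).trans (hdM s hs))
  have hd_le : ∀ s ∈ Ioc 0 σ, d s ≤ ENNReal.ofReal (Real.exp (2 * L * s)) * Φ := fun s hs =>
    calc d s = ENNReal.ofReal (Real.exp (2 * L * s)) *
          (ENNReal.ofReal (Real.exp (-(2 * L * s))) * d s) := by
          rw [← mul_assoc, ← ENNReal.ofReal_mul (Real.exp_pos _).le, ← Real.exp_add,
            add_neg_cancel, Real.exp_zero, ENNReal.ofReal_one, one_mul]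
      _ ≤ ENNReal.ofReal (Real.exp (2 * L * s)) * Φ := by
          gcongr
          exact le_iSup₂ (f := fun s _ => ENNReal.ofReal (Real.exp (-(2 * L * s))) * d s) s hs
  have hΦ_half : 2⁻¹ * Φ + 2⁻¹ * Φ ≤ E + 2⁻¹ * Φ := by
    rw [← add_mul, ENNReal.inv_two_add_inv_two, one_mul]
    exact iSup₂_le fun t ht => ofReal_exp_neg_mul_le_of_le_add_lintegral hL hd_le hd ht
  have hΦ_le : Φ ≤ 2 * E := by
    calc Φ = 2 * (2⁻¹ * Φ) := by
          rw [← mul_assoc, ENNReal.mul_inv_cancel two_ne_zero ENNReal.ofNat_ne_top, one_mul]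
      _ ≤ 2 * E := by
          gcongr
          exact ENNReal.le_of_add_le_add_right (ENNReal.mul_ne_top (by simp) hΦ_ne_top) hΦ_half
  intro t ht
  calc d t ≤ ENNReal.ofReal (Real.exp (2 * L * t)) * Φ := hd_le t ht
    _ ≤ ENNReal.ofReal (Real.exp (2 * L * σ)) * (2 * E) := by
        gcongr
        nlinarith [ht.2]
    _ = ENNReal.ofReal (2 * Real.exp (2 * L * σ)) * E := by
        rw [ENNReal.ofReal_mul zero_le_two, ENNReal.ofReal_ofNat]; ring

section Kernel

variable {X : Type*} [MeasurableSpace X] {μ : Measure X} {K w f g : X → ℝ}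

lemma lintegral_kernel_le_add (hK : ∀ y, 0 ≤ K y) (hw : ∀ y, 0 ≤ w y)
    (hg : Measurable fun y => K y * g y * w y) :
    ∫⁻ y, ENNReal.ofReal (K y * f y * w y) ∂μ ≤
      ∫⁻ y, ENNReal.ofReal (K y * g y * w y) ∂μ +
        ∫⁻ y, ENNReal.ofReal (K y * |f y - g y| * w y) ∂μ := by
  rw [← lintegral_add_left hg.ennreal_ofReal]
  refine lintegral_mono fun y => (ENNReal.ofReal_le_ofReal ?_).trans ENNReal.ofReal_add_le
  have hKw := mul_nonneg (hK y) (hw y)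
  nlinarith [mul_nonneg hKw (by linarith [le_abs_self (f y - g y)] : 0 ≤ g y + |f y - g y| - f y)]

lemma lintegral_kernel_le_of_ae_le (hK : ∀ y, 0 ≤ K y) (hw : ∀ y, 0 ≤ w y)
    (hK1 : ∫⁻ y, ENNReal.ofReal (K y * w y) ∂μ = 1) {c : ℝ≥0∞}
    (hf : ∀ᵐ y ∂μ, ENNReal.ofReal (f y) ≤ c) :
    ∫⁻ y, ENNReal.ofReal (K y * f y * w y) ∂μ ≤ c := by
  rcases eq_or_ne c ⊤ with rfl | hc
  · exact le_top
  have hpt : ∀ᵐ y ∂μ, ENNReal.ofReal (K y * f y * w y) ≤ ENNReal.ofReal (K y * w y) * c := by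
    filter_upwards [hf] with y hy
    rw [mul_right_comm, ENNReal.ofReal_mul (mul_nonneg (hK y) (hw y))]
    exact mul_le_mul_right hy _
  calc _ ≤ ∫⁻ y, ENNReal.ofReal (K y * w y) * c ∂μ := lintegral_mono_ae hpt
    _ = c := by rw [lintegral_mul_const' _ _ hc, hK1, one_mul]

end Kernel

section Duhamel

variable {X : Type*} [MeasureSpace X] {w : X → ℝ}
  {Γ : X → X → ℝ → ℝ} {f g : X → ℝ} {F G : X → ℝ → ℝ}

/- `IsSolOn` asks, definitionally,
`ENNReal.ofReal (u x t) = duhamel w Γ u₀ (fun y s => u y s ^ p) x t` for a.e. `x`. -/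
noncomputable def duhamel (w : X → ℝ) (Γ : X → X → ℝ → ℝ) (u₀ : X → ℝ) (F : X → ℝ → ℝ)
    (x : X) (t : ℝ) : ℝ≥0∞ :=
  (∫⁻ y, ENNReal.ofReal (Γ x y t * u₀ y * w y)) +
    ∫⁻ s in Ioo (0 : ℝ) t, ∫⁻ y, ENNReal.ofReal (Γ x y (t - s) * F y s * w y)

lemma duhamel_le_add [SFinite (volume : Measure X)]
    (hΓm : Measurable fun q : X × X × ℝ => Γ q.1 q.2.1 q.2.2)
    (hΓ0 : ∀ x y t, 0 ≤ Γ x y t) (hwm : Measurable w) (hw0 : ∀ y, 0 ≤ w y)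
    (hg : Measurable g) (hG : Measurable (Function.uncurry G)) (x : X) (t : ℝ) :
    duhamel w Γ f F x t ≤ duhamel w Γ g G x t +
      duhamel w Γ (fun y => |f y - g y|) (fun y s => |F y s - G y s|) x t := by
  have hG_int : Measurable fun s => ∫⁻ y, ENNReal.ofReal (Γ x y (t - s) * G y s * w y) :=
    have hΓ' : Measurable fun q : ℝ × X => Γ x q.2 (t - q.1) :=
      hΓm.comp (f := fun q : ℝ × X => (x, q.2, t - q.1)) (by fun_prop)
    have hG' : Measurable fun q : ℝ × X => G q.2 q.1 :=
      hG.comp (f := fun q : ℝ × X => (q.2, q.1)) (by fun_prop)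
    ((hΓ'.mul hG').mul (hwm.comp measurable_snd)).ennreal_ofReal.lintegral_prod_right'
  have hΓ (r : ℝ) : Measurable fun y => Γ x y r :=
    hΓm.comp (f := fun y => (x, y, r)) (by fun_prop)
  have hG_slice (s : ℝ) : Measurable fun y => G y s :=
    hG.comp (f := fun y => (y, s)) (by fun_prop)
  calc duhamel w Γ f F x t
      ≤ ((∫⁻ y, ENNReal.ofReal (Γ x y t * g y * w y)) +
          ∫⁻ y, ENNReal.ofReal (Γ x y t * |f y - g y| * w y)) +
        ∫⁻ s in Ioo (0 : ℝ) t, ((∫⁻ y, ENNReal.ofReal (Γ x y (t - s) * G y s * w y)) +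
          ∫⁻ y, ENNReal.ofReal (Γ x y (t - s) * |F y s - G y s| * w y)) :=
        add_le_add (lintegral_kernel_le_add (hΓ0 x · t) hw0 (((hΓ t).mul hg).mul hwm))
          (lintegral_mono fun s => lintegral_kernel_le_add (hΓ0 x · (t - s)) hw0
            (((hΓ (t - s)).mul (hG_slice s)).mul hwm))
    _ = _ := by rw [lintegral_add_left hG_int, add_add_add_comm]; rfl

lemma duhamel_le_of_ae_le (hΓ0 : ∀ x y t, 0 ≤ Γ x y t) (hw0 : ∀ y, 0 ≤ w y) {x : X}
    (hK1 : ∀ r, 0 < r → ∫⁻ y, ENNReal.ofReal (Γ x y r * w y) = 1) {t : ℝ} (ht : 0 < t) {a : ℝ≥0∞}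
    {b : ℝ → ℝ≥0∞} (hb : Measurable b) (hf : ∀ᵐ y, ENNReal.ofReal (f y) ≤ a)
    (hF : ∀ s ∈ Ioo 0 t, ∀ᵐ y, ENNReal.ofReal (F y s) ≤ b s) :
    duhamel w Γ f F x t ≤ a + ∫⁻ s in Ioo 0 t, b s :=
  add_le_add (lintegral_kernel_le_of_ae_le (hΓ0 x · t) hw0 (hK1 t ht) hf)
    (setLIntegral_mono hb fun s hs =>
      lintegral_kernel_le_of_ae_le (hΓ0 x · (t - s)) hw0 (hK1 _ (sub_pos.2 hs.2)) (hF s hs))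

end Duhamel

lemma CaseAB.nonneg {n : ℕ} {hn : 0 < n} {α : ℝ} {w : EuclideanSpace ℝ (Fin n) → ℝ}
    (hw : CaseAB n hn α w) (x : EuclideanSpace ℝ (Fin n)) : 0 ≤ w x := by
  rcases hw with ⟨-, -, hwx⟩ | ⟨-, -, hwx⟩ <;> rw [hwx] <;> positivity

lemma CaseAB.measurable {n : ℕ} {hn : 0 < n} {α : ℝ} {w : EuclideanSpace ℝ (Fin n) → ℝ}
    (hw : CaseAB n hn α w) : Measurable w := by
  rcases hw with ⟨-, -, hwx⟩ | ⟨-, -, hwx⟩ <;> rw [funext hwx] <;> fun_prop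

section Solutions

variable {n : ℕ} {w : EuclideanSpace ℝ (Fin n) → ℝ}
  {Γ : EuclideanSpace ℝ (Fin n) → EuclideanSpace ℝ (Fin n) → ℝ → ℝ} {p : ℝ}
  {u₀₁ u₀₂ : EuclideanSpace ℝ (Fin n) → ℝ} {u₁ u₂ : EuclideanSpace ℝ (Fin n) → ℝ → ℝ}
  {T : ℝ≥0∞}

theorem IsSolOn.ae_ofReal_abs_sub_le_duhamel
    (hΓm : Measurable fun q : (EuclideanSpace ℝ (Fin n)) × (EuclideanSpace ℝ (Fin n)) × ℝ =>
      Γ q.1 q.2.1 q.2.2)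
    (hΓ0 : ∀ x y t, 0 ≤ Γ x y t) (hwm : Measurable w) (hw0 : ∀ y, 0 ≤ w y)
    (hu₀₁ : Measurable u₀₁) (hu₀₂ : Measurable u₀₂)
    (h₁ : IsSolOn n w Γ p u₀₁ u₁ T) (h₂ : IsSolOn n w Γ p u₀₂ u₂ T)
    {t : ℝ} (ht : 0 < t) (htT : ENNReal.ofReal t < T) :
    ∀ᵐ x, ENNReal.ofReal |u₁ x t - u₂ x t| ≤
      duhamel w Γ (fun y => |u₀₁ y - u₀₂ y|) (fun y s => |u₁ y s ^ p - u₂ y s ^ p|) x t := by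
  have hF₁ : Measurable (Function.uncurry fun y s => u₁ y s ^ p) := h₁.1.pow_const p
  have hF₂ : Measurable (Function.uncurry fun y s => u₂ y s ^ p) := h₂.1.pow_const p
  filter_upwards [h₁.2.2.2 t ht htT, h₂.2.2.2 t ht htT] with x e₁ e₂
  refine ENNReal.ofReal_abs_sub_le_of_le_add (h₁.2.1 x t) (h₂.2.1 x t) ?_ ?_
  · rw [e₁, e₂]
    exact duhamel_le_add hΓm hΓ0 hwm hw0 hu₀₂ hF₂ x t
  · have h := duhamel_le_add (f := u₀₂) (F := fun y s => u₂ y s ^ p)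
      hΓm hΓ0 hwm hw0 hu₀₁ hF₁ x t
    simp only [abs_sub_comm (u₀₂ _), abs_sub_comm (u₂ _ _ ^ p)] at h
    rw [e₁, e₂]
    exact h

noncomputable def stabilityConst (p M σ : ℝ) : ℝ := 2 * Real.exp (2 * (p * max M 1 ^ (p - 1)) * σ)

theorem IsSolOn.eLpNorm_sub_le
    (hΓm : Measurable fun q : (EuclideanSpace ℝ (Fin n)) × (EuclideanSpace ℝ (Fin n)) × ℝ =>
      Γ q.1 q.2.1 q.2.2)
    (hΓ0 : ∀ x y t, 0 ≤ Γ x y t) (hK1 : PropK1 w Γ) (hwm : Measurable w) (hw0 : ∀ y, 0 ≤ w y)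
    (hp : 1 ≤ p) (hu₀₁ : Measurable u₀₁) (hu₀₂ : Measurable u₀₂)
    (h₁ : IsSolOn n w Γ p u₀₁ u₁ T) (h₂ : IsSolOn n w Γ p u₀₂ u₂ T)
    {σ M : ℝ} (hσT : ENNReal.ofReal σ < T)
    (hM₁ : ∀ t, 0 < t → t ≤ σ → ∀ᵐ x, u₁ x t ≤ M) (hM₂ : ∀ t, 0 < t → t ≤ σ → ∀ᵐ x, u₂ x t ≤ M)
    {t : ℝ} (ht : 0 < t) (htσ : t ≤ σ) :
    eLpNorm (fun x => u₁ x t - u₂ x t) ⊤ volume ≤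
      ENNReal.ofReal (stabilityConst p M σ) * eLpNorm (fun x => u₀₁ x - u₀₂ x) ⊤ volume := by
  set L := p * max M 1 ^ (p - 1)
  have hL : 0 < L := by positivity
  have hbounds : ∀ s ∈ Ioc 0 σ, ∀ᵐ x, u₁ x s ∈ Icc 0 (max M 1) ∧ u₂ x s ∈ Icc 0 (max M 1) :=
    fun s hs => by
      filter_upwards [hM₁ s hs.1 hs.2, hM₂ s hs.1 hs.2] with x h₁x h₂x
      exact ⟨⟨h₁.2.1 x s, h₁x.trans (le_max_left _ _)⟩, ⟨h₂.2.1 x s, h₂x.trans (le_max_left _ _)⟩⟩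
  refine le_ofReal_mul_of_le_add_lintegral_majorant hL ENNReal.ofReal_ne_top
    (d := fun s => eLpNorm (fun x => u₁ x s - u₂ x s) ⊤ volume)
    (M := ENNReal.ofReal (max M 1)) ?_ ?_ t ⟨ht, htσ⟩
  · intro s hs
    rw [eLpNorm_exponent_top]
    refine eLpNormEssSup_le_of_ae_bound ?_
    filter_upwards [hbounds s hs] with x ⟨h₁x, h₂x⟩
    rw [Real.norm_eq_abs, abs_sub_le_iff]
    constructor <;> linarith [h₁x.1, h₁x.2, h₂x.1, h₂x.2]
  · intro t ht B hB hdB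
    have htT : ENNReal.ofReal t < T := (ENNReal.ofReal_le_ofReal ht.2).trans_lt hσT
    rw [eLpNorm_exponent_top]
    refine eLpNormEssSup_le_of_ae_enorm_bound ?_
    filter_upwards [h₁.ae_ofReal_abs_sub_le_duhamel hΓm hΓ0 hwm hw0 hu₀₁ hu₀₂ h₂ ht.1 htT]
      with x hx
    rw [Real.enorm_eq_ofReal_abs]
    refine hx.trans (duhamel_le_of_ae_le hΓ0 hw0 (fun r hr => (hK1 x x r hr).2) ht.1
      (measurable_const.mul hB) ?_ ?_)
    · simpa only [Real.enorm_eq_ofReal_abs, eLpNorm_exponent_top] using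
        enorm_ae_le_eLpNormEssSup (fun y => u₀₁ y - u₀₂ y) volume
    · intro s hs
      have hs' : s ∈ Ioc 0 σ := ⟨hs.1, hs.2.le.trans ht.2⟩
      filter_upwards [hbounds s hs', enorm_ae_le_eLpNormEssSup (fun y => u₁ y s - u₂ y s) volume]
        with y ⟨h₁y, h₂y⟩ hy
      rw [Real.enorm_eq_ofReal_abs, ← eLpNorm_exponent_top] at hy
      calc ENNReal.ofReal |u₁ y s ^ p - u₂ y s ^ p|
          ≤ ENNReal.ofReal (L * |u₁ y s - u₂ y s|) :=
            ENNReal.ofReal_le_ofReal (abs_rpow_sub_rpow_le hp h₁y h₂y)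
        _ = ENNReal.ofReal L * ENNReal.ofReal |u₁ y s - u₂ y s| := ENNReal.ofReal_mul hL.le
        _ ≤ ENNReal.ofReal L * B s := by gcongr; exact hy.trans (hdB s hs)

end Solutions

/-- Lemma 4.1: in case (A) or (B), with `p > 1` and measurable `Γ ≥ 0` satisfying (K1),
if `u₁, u₂` solve the integral equation on `ℝⁿ × (0,τ)` with bounded nonnegative initial
data `u₀₁, u₀₂`, then for any `σ ∈ (0,τ)` there is a constant `C > 0`, depending only on
`p`, `σ` and a bound `M` for `‖u₁‖_{L^∞(0,σ;L^∞)}` and `‖u₂‖_{L^∞(0,σ;L^∞)}`, such that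
`sup_{0<t≤σ} ‖u₁(t) - u₂(t)‖_∞ ≤ C ‖u₀₁ - u₀₂‖_∞`. In particular, bounded solutions with
the same initial data coincide. -/
theorem stmt_18 (n : ℕ) (hn : 0 < n) (α : ℝ) (w : EuclideanSpace ℝ (Fin n) → ℝ)
    (hw : CaseAB n hn α w) (p : ℝ) (hp : 1 < p) :
    (∀ τ σ M : ℝ, 0 < σ → σ < τ →
      ∃ C : ℝ, 0 < C ∧
        ∀ Γ : EuclideanSpace ℝ (Fin n) → EuclideanSpace ℝ (Fin n) → ℝ → ℝ,
          Measurable (fun q : (EuclideanSpace ℝ (Fin n)) × (EuclideanSpace ℝ (Fin n)) × ℝ =>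
            Γ q.1 q.2.1 q.2.2) →
          (∀ x y t, 0 ≤ Γ x y t) → PropK1 w Γ →
          ∀ u₀₁ u₀₂ : EuclideanSpace ℝ (Fin n) → ℝ,
            Measurable u₀₁ → Measurable u₀₂ → (∀ x, 0 ≤ u₀₁ x) → (∀ x, 0 ≤ u₀₂ x) →
            MemLp u₀₁ ⊤ (volume : Measure (EuclideanSpace ℝ (Fin n))) →
            MemLp u₀₂ ⊤ (volume : Measure (EuclideanSpace ℝ (Fin n))) →
            ∀ u₁ u₂ : EuclideanSpace ℝ (Fin n) → ℝ → ℝ,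
              IsSolOn n w Γ p u₀₁ u₁ (ENNReal.ofReal τ) →
              IsSolOn n w Γ p u₀₂ u₂ (ENNReal.ofReal τ) →
              (∀ t : ℝ, 0 < t → t ≤ σ →
                ∀ᵐ x ∂(volume : Measure (EuclideanSpace ℝ (Fin n))), u₁ x t ≤ M) →
              (∀ t : ℝ, 0 < t → t ≤ σ →
                ∀ᵐ x ∂(volume : Measure (EuclideanSpace ℝ (Fin n))), u₂ x t ≤ M) →
              ∀ t : ℝ, 0 < t → t ≤ σ →
                eLpNorm (fun x => u₁ x t - u₂ x t) ⊤
                    (volume : Measure (EuclideanSpace ℝ (Fin n))) ≤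
                  ENNReal.ofReal C *
                    eLpNorm (fun x => u₀₁ x - u₀₂ x) ⊤
                      (volume : Measure (EuclideanSpace ℝ (Fin n)))) ∧
    ∀ Γ : EuclideanSpace ℝ (Fin n) → EuclideanSpace ℝ (Fin n) → ℝ → ℝ,
      Measurable (fun q : (EuclideanSpace ℝ (Fin n)) × (EuclideanSpace ℝ (Fin n)) × ℝ =>
        Γ q.1 q.2.1 q.2.2) →
      (∀ x y t, 0 ≤ Γ x y t) → PropK1 w Γ →
      ∀ τ : ℝ, 0 < τ →
        ∀ u₀ : EuclideanSpace ℝ (Fin n) → ℝ, Measurable u₀ → (∀ x, 0 ≤ u₀ x) →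
          MemLp u₀ ⊤ (volume : Measure (EuclideanSpace ℝ (Fin n))) →
          ∀ u₁ u₂ : EuclideanSpace ℝ (Fin n) → ℝ → ℝ,
            IsSolOn n w Γ p u₀ u₁ (ENNReal.ofReal τ) →
            IsSolOn n w Γ p u₀ u₂ (ENNReal.ofReal τ) →
            ∀ t : ℝ, 0 < t → t < τ →
              (fun x => u₁ x t) =ᵐ[(volume : Measure (EuclideanSpace ℝ (Fin n)))]
                fun x => u₂ x t := by
  have hw0 := hw.nonneg
  have hwm := hw.measurable
  refine ⟨fun τ σ M hσ hστ => ⟨stabilityConst p M σ, by unfold stabilityConst; positivity,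
    fun Γ hΓm hΓ0 hK1 u₀₁ u₀₂ hu₀₁ hu₀₂ _ _ _ _ u₁ u₂ h₁ h₂ hM₁ hM₂ t ht htσ =>
      h₁.eLpNorm_sub_le hΓm hΓ0 hK1 hwm hw0 hp.le hu₀₁ hu₀₂ h₂
        ((ENNReal.ofReal_lt_ofReal_iff (hσ.trans hστ)).2 hστ) hM₁ hM₂ ht htσ⟩, ?_⟩
  intro Γ hΓm hΓ0 hK1 τ hτ u₀ hu₀ _ _ u₁ u₂ h₁ h₂ t ht htτ
  have htT : ENNReal.ofReal t < ENNReal.ofReal τ := (ENNReal.ofReal_lt_ofReal_iff hτ).2 htτ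
  obtain ⟨M₁, hM₁⟩ := h₁.2.2.1
  obtain ⟨M₂, hM₂⟩ := h₂.2.2.1
  have hbound (u : EuclideanSpace ℝ (Fin n) → ℝ → ℝ) (Mu : ℝ) (hMu : Mu ≤ max M₁ M₂)
      (hu : ∀ s : ℝ, 0 < s → ENNReal.ofReal s < ENNReal.ofReal τ → ∀ᵐ x, u x s ≤ Mu)
      (s : ℝ) (hs : 0 < s) (hst : s ≤ t) : ∀ᵐ x, u x s ≤ max M₁ M₂ :=
    (hu s hs ((ENNReal.ofReal_le_ofReal hst).trans_lt htT)).mono fun _ h => h.trans hMu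
  have hzero := h₁.eLpNorm_sub_le hΓm hΓ0 hK1 hwm hw0 hp.le hu₀ hu₀ h₂ htT
    (hbound u₁ M₁ (le_max_left _ _) hM₁) (hbound u₂ M₂ (le_max_right _ _) hM₂) ht le_rfl
  rw [show eLpNorm (fun x => u₀ x - u₀ x) ⊤ volume = 0 by simp [Pi.zero_def], mul_zero,
    nonpos_iff_eq_zero, eLpNorm_exponent_top, eLpNormEssSup_eq_zero_iff] at hzero
  filter_upwards [hzero] with x hx
  exact sub_eq_zero.1 hx
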